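/- arXiv:1802.03598 — 4 statements merged into one kernel-verified Lean document; each statement's English description precedes it below -/
import Mathlib

section
/- Let n ≥ 2 and let α : ℕ^n → ℕ^n be an order isomorphism of ℕ^n with the product order such that α fixes each element x_i^2 = (1,...,2,...,1) (the tuple with 2 in the i-th coordinate and 1 elsewhere) for all i = 1,...,n. Then α is the identity map. -/
lemma pnat_lt_succ (a : ℕ+) : a < a + 1 := by
  have : (a:ℕ) < (a:ℕ) + 1 := Nat.lt_succ_self _
  exact_mod_cast this

lemma cov_char {n : ℕ} {a b : Fin n → ℕ+} (h : a ⋖ b) :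
    ∃ j, b = Function.update a j (a j + 1) := by
  obtain ⟨hab, hmax⟩ := h
  obtain ⟨hle, j, hj⟩ := Pi.lt_def.mp hab
  refine ⟨j, ?_⟩
  set c := Function.update a j (a j + 1) with hc
  have hac : a < c := by
    refine lt_of_le_of_ne ?_ ?_
    · intro k
      by_cases hk : k = j <;> simp [hc, Function.update, hk]
      exact le_of_lt (pnat_lt_succ _)
    · intro he
      have := congrFun he j
      simp [hc] at this
      exact absurd this (ne_of_lt (pnat_lt_succ (a j)))
  have hcb : c ≤ b := by
    intro k
    by_cases hk : k = j
    · subst hk; simpa [hc] using hj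
    · simpa [hc, Function.update, hk] using hle k
  rcases hcb.lt_or_eq with hlt | heq
  · exact absurd hlt (hmax hac)
  · exact heq.symm

lemma cov_succ {n : ℕ} (a : Fin n → ℕ+) (j : Fin n) :
    a ⋖ Function.update a j (a j + 1) := by
  constructor
  · refine lt_of_le_of_ne ?_ ?_
    · intro k
      by_cases hk : k = j <;> simp [Function.update, hk]
      exact le_of_lt (pnat_lt_succ _)
    · intro he
      have := congrFun he j
      simp at this
      exact absurd this (ne_of_lt (pnat_lt_succ (a j)))
  · intro c hac hcb
    obtain ⟨hle, l, hl⟩ := Pi.lt_def.mp hac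
    have hlj : l = j := by
      by_contra hlj
      have := hcb.le l
      simp [Function.update, hlj] at this
      exact absurd (lt_of_lt_of_le hl this) (lt_irrefl _)
    subst hlj
    have hceq : c = Function.update a l (a l + 1) := by
      funext k
      by_cases hk : k = l
      · subst hk
        have h1 := hcb.le k
        simp [Function.update] at h1 ⊢
        exact le_antisymm h1 hl
      · have h1 := hcb.le k
        simp [Function.update, hk] at h1 ⊢
        exact le_antisymm h1 (hle k)
    rw [hceq] at hcb
    exact lt_irrefl _ hcb

lemma sum_update_one_lt {n : ℕ} (z : Fin n → ℕ+) (i : Fin n) (hi : 1 < z i) :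
    (∑ k, ((Function.update z i 1) k : ℕ)) < ∑ k, (z k : ℕ) := by
  apply Finset.sum_lt_sum
  · intro k _
    by_cases hk : k = i <;> simp [Function.update, hk]
    · exact_mod_cast le_of_lt hi
  · exact ⟨i, Finset.mem_univ i, by simpa using (by exact_mod_cast hi : (1:ℕ) < (z i : ℕ))⟩

lemma sum_update_succ {n : ℕ} (a : Fin n → ℕ+) (j : Fin n) :
    (∑ k, ((Function.update a j (a j + 1)) k : ℕ)) = (∑ k, (a k : ℕ)) + 1 := by
  have h1 : (fun k => ((Function.update a j (a j + 1)) k : ℕ))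
      = Function.update (fun k => (a k : ℕ)) j ((a j : ℕ) + 1) := by
    funext k
    by_cases hk : k = j <;> simp [Function.update, hk]
  rw [h1, Finset.sum_update_of_mem (Finset.mem_univ j)]
  rw [Finset.sdiff_singleton_eq_erase]
  have h2 : (∑ k, (a k : ℕ)) = (a j : ℕ) + ∑ k ∈ Finset.univ.erase j, (a k : ℕ) :=
    (Finset.add_sum_erase _ _ (Finset.mem_univ j)).symm
  omega

/-- For n ≥ 2, an order isomorphism α of (ℕ^n, product order) fixing each
x_i^2 = (1,...,2,...,1) (2 in the i-th coordinate, 1 elsewhere) is the identity map. -/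
theorem stmt3 (n : ℕ) (hn : 2 ≤ n) (α : (Fin n → ℕ+) ≃o (Fin n → ℕ+))
    (h : ∀ i : Fin n,
      α (fun j => if j = i then 2 else 1) = fun j => if j = i then 2 else 1) :
    ∀ z, α z = z := by
  suffices H : ∀ s : ℕ, ∀ z : Fin n → ℕ+, (∑ k, (z k : ℕ)) = s → α z = z by
    intro z; exact H _ z rfl
  intro s
  induction s using Nat.strong_induction_on with
  | _ s IH =>
  have key2 : ∀ u : Fin n → ℕ+, (∑ k, (u k : ℕ)) = s →
      ∀ i j, i ≠ j → 1 < u i → 1 < u j → α u = u := by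
    intro u hu i j hij hi hj
    set a := Function.update u i 1 with ha
    set b := Function.update u j 1 with hb
    have hab : a ⊔ b = u := by
      funext k
      by_cases hk : k = i
      · subst hk
        have hkj : k ≠ j := hij
        simp [ha, hb, Function.update, hkj, sup_eq_right.mpr (le_of_lt hi)]
      · by_cases hk2 : k = j
        · subst hk2
          simp [ha, hb, Function.update, hk, sup_eq_left.mpr (le_of_lt hj)]
        · simp [ha, hb, Function.update, hk, hk2]
    have hA : α a = a := IH _ (hu ▸ sum_update_one_lt u i hi) a rfl
    have hB : α b = b := IH _ (hu ▸ sum_update_one_lt u j hj) b rfl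
    rw [← hab, α.map_sup, hA, hB]
  intro z hz
  by_cases hex : ∃ i, 1 < z i
  · obtain ⟨i, hi⟩ := hex
    by_cases hex2 : ∃ j, j ≠ i ∧ 1 < z j
    · obtain ⟨j, hj, hj2⟩ := hex2
      exact key2 z hz i j (Ne.symm hj) hi hj2
    · push_neg at hex2
      have hone : ∀ j, j ≠ i → z j = 1 := by
        intro j hj
        exact le_antisymm (hex2 j hj) (z j).one_le
      by_cases h2 : z i = 2
      · have hzeq : z = fun j => if j = i then 2 else 1 := by
          funext k
          by_cases hk : k = i <;> simp [hk, h2]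
          exact hone k hk
        rw [hzeq]; exact h i
      · -- z i ≥ 3
        have hcoe : (2 : ℕ) < (z i : ℕ) := by
          have h1 : (1 : ℕ) < (z i : ℕ) := by exact_mod_cast hi
          have h2' : (z i : ℕ) ≠ 2 := by
            intro hc
            exact h2 (by exact_mod_cast hc)
          omega
        set m : ℕ+ := ⟨(z i : ℕ) - 1, by omega⟩ with hmdef
        have hmn : (m : ℕ) = (z i : ℕ) - 1 := rfl
        have hm : z i = m + 1 := by
          apply PNat.coe_injective
          push_cast
          omega
        set w : Fin n → ℕ+ := Function.update z i m with hwdef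
        have hz2 : z = Function.update w i (w i + 1) := by
          funext k
          by_cases hk : k = i
          · subst hk; simp [hwdef, Function.update, hm]
          · simp [hwdef, Function.update, hk]
        have hsumw : (∑ k, (w k : ℕ)) < s := by
          have := sum_update_succ w i
          rw [← hz2, hz] at this
          omega
        have hw : α w = w := IH _ hsumw w rfl
        have hcov : w ⋖ z := by rw [hz2]; exact cov_succ w i
        have hcov2 : w ⋖ α z := by
          have := (apply_covBy_apply_iff α).mpr hcov
          rwa [hw] at this
        obtain ⟨j, hj⟩ := cov_char hcov2
        by_cases hji : j = i
        · subst hji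
          rw [hj, ← hz2]
        · have hwj : w j = 1 := by
            simp [hwdef, Function.update, hji]
            exact hone j hji
          set u := Function.update w j (w j + 1) with hudef
          have hwi : w i = m := by simp [hwdef]
          have hui : 1 < u i := by
            have : u i = m := by simp [hudef, Function.update, Ne.symm hji, hwi]
            rw [this]
            have : (1:ℕ) < (m:ℕ) := by omega
            exact_mod_cast this
          have huj : 1 < u j := by
            have : u j = 2 := by simp [hudef, hwj]; rfl
            rw [this]; decide
          have hsumu : (∑ k, (u k : ℕ)) = s := by
            have h1 := sum_update_succ w j
            have h2'' := sum_update_succ w i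
            rw [← hz2, hz] at h2''
            rw [← hudef] at h1
            omega
          have hu : α u = u := key2 u hsumu i j (fun hc => hji hc.symm) hui huj
          have hzu : z = u := α.injective (by rw [hj, hu])
          exfalso
          have hcj := congrFun hzu j
          rw [hone j hji] at hcj
          have : u j = 2 := by simp [hudef, hwj]; rfl
          rw [this] at hcj
          exact absurd hcj (by decide)
  · push_neg at hex
    have hz1 : z = ⊥ := by
      funext k
      exact le_antisymm (hex k) (z k).one_le
    rw [hz1, map_bot]
end

section
/- For any positive integer n, every order isomorphism of ℕ^n with the product order is induced by a permutation of the coordinates; consequently, the group of order automorphisms of (ℕ^n, product order) is isomorphic to the symmetric group S_n. -/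
/-!
The sup-irreducible elements of `ι → α`, for `α` a linear order with `⊥`, are exactly the
points `≠ ⊥` of the coordinate axes, so an order isomorphism `(ι → α) ≃o (κ → α)` maps each axis
into an axis, and the axes correspond bijectively. Along an axis the isomorphism induces a
strictly monotone self-map of `α` whose inverse is strictly monotone as well; when `α` is
well-ordered both maps are inflationary, hence the identity. Finally, every point is the
supremum of its projections onto the axes, and order isomorphisms preserve suprema.
-/

open Function Set

section Axis

variable {ι α : Type*} [DecidableEq ι] [PartialOrder α] [OrderBot α] {i j : ι} {x : ι → α}

def axis (i : ι) : Set (ι → α) := range (update ⊥ i)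

lemma update_bot_mem_axis (i : ι) (a : α) : update ⊥ i a ∈ axis i := mem_range_self a

lemma update_bot_eq_bot_iff {a : α} : update (⊥ : ι → α) i a = ⊥ ↔ a = ⊥ :=
  update_eq_self_iff

lemma update_bot_apply_eq_of_mem_axis (hx : x ∈ axis i) : update ⊥ i (x i) = x := by
  obtain ⟨a, rfl⟩ := hx
  simp

lemma mem_axis_iff : x ∈ axis i ↔ ∀ j ≠ i, x j = ⊥ := by
  refine ⟨fun hx j hj => ?_, fun hx => ⟨x i, ?_⟩⟩
  · rw [← update_bot_apply_eq_of_mem_axis hx, update_of_ne hj]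
    rfl
  · ext j
    rcases eq_or_ne j i with rfl | hj
    · simp
    · rw [update_of_ne hj, hx j hj]
      rfl

lemma eq_of_mem_axis_of_mem_axis (hi : x ∈ axis i) (hj : x ∈ axis j) (hx : x ≠ ⊥) : i = j := by
  by_contra hij
  rw [← update_bot_apply_eq_of_mem_axis hi, Ne, update_bot_eq_bot_iff] at hx
  exact hx (mem_axis_iff.1 hj i hij)

lemma update_bot_left_injective {a : α} (ha : a ≠ ⊥) : Injective fun i => update (⊥ : ι → α) i a :=
  fun i j h => eq_of_mem_axis_of_mem_axis (update_bot_mem_axis i a)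
    ((congrArg (· ∈ axis j) h).mpr (update_bot_mem_axis j a)) (mt update_bot_eq_bot_iff.1 ha)

lemma isLowerSet_axis (i : ι) : IsLowerSet (axis (α := α) i) := fun _ _ hyx hy =>
  mem_axis_iff.2 fun j hj => le_bot_iff.1 (mem_axis_iff.1 hy j hj ▸ hyx j)

lemma isLUB_range_update_bot (x : ι → α) : IsLUB (range fun i => update ⊥ i (x i)) x := by
  refine ⟨?_, fun y hy i => ?_⟩
  · rintro _ ⟨i, rfl⟩
    exact update_le_iff.2 ⟨le_rfl, fun _ _ => bot_le⟩
  · simpa using hy ⟨i, rfl⟩ i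

end Axis

lemma SupIrred.orderIso_apply {β γ : Type*} [SemilatticeSup β] [SemilatticeSup γ] {b : β}
    (hb : SupIrred b) (e : β ≃o γ) : SupIrred (e b) := by
  refine ⟨fun hmin => hb.1 fun c hc => e.le_iff_le.1 (hmin (e.monotone hc)), fun c d hcd => ?_⟩
  have : e.symm c ⊔ e.symm d = b := by rw [← map_sup, hcd, e.symm_apply_apply]
  simpa only [e.symm_apply_eq] using hb.2 this

section SemilatticeSup

variable {ι α : Type*} [DecidableEq ι] [SemilatticeSup α] [OrderBot α]

lemma SupIrred.exists_mem_axis {x : ι → α} (hx : SupIrred x) : ∃ i, x ∈ axis i := by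
  obtain ⟨i, hi⟩ : ∃ i, x i ≠ ⊥ := by
    by_contra! h
    exact hx.ne_bot (funext h)
  refine ⟨i, mem_axis_iff.2 fun j hj => ?_⟩
  by_contra hxj
  have hsplit : update x i ⊥ ⊔ update x j ⊥ = x := by
    ext k
    rcases eq_or_ne k i with rfl | hki
    · simp [update_of_ne hj.symm]
    · rcases eq_or_ne k j with rfl | hkj
      · simp [update_of_ne hki]
      · simp [update_of_ne hki, update_of_ne hkj]
  rcases hx.2 hsplit with h | h
  · exact hi (by simpa using (congrFun h i).symm)
  · exact hxj (by simpa using (congrFun h j).symm)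

end SemilatticeSup

section LinearOrder

variable {ι α : Type*} [DecidableEq ι] [LinearOrder α] [OrderBot α] {i : ι} {a : α}

lemma supIrred_update_bot (ha : a ≠ ⊥) : SupIrred (update (⊥ : ι → α) i a) := by
  refine ⟨fun hmin => ha (update_bot_eq_bot_iff.1 hmin.eq_bot), fun b c hbc => ?_⟩
  have hb : b ∈ axis i := isLowerSet_axis i (hbc ▸ le_sup_left) (update_bot_mem_axis i a)
  have hc : c ∈ axis i := isLowerSet_axis i (hbc ▸ le_sup_right) (update_bot_mem_axis i a)
  have hbci : max (b i) (c i) = a := by simpa using congrFun hbc i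
  rw [← update_bot_apply_eq_of_mem_axis hb, ← update_bot_apply_eq_of_mem_axis hc, ← hbci]
  exact (max_choice (b i) (c i)).imp (congrArg _ ·.symm) (congrArg _ ·.symm)

end LinearOrder

namespace OrderIso

section Reindex

variable {ι κ α : Type*} [Preorder α]

def funCongrLeft (σ : ι ≃ κ) : (ι → α) ≃o (κ → α) where
  toFun x := x ∘ σ.symm
  invFun y := y ∘ σ
  left_inv x := by ext; simp
  right_inv y := by ext; simp
  map_rel_iff' {x y} := by simp [Pi.le_def, σ.symm.surjective.forall]

lemma funCongrLeft_apply (σ : ι ≃ κ) (x : ι → α) : funCongrLeft σ x = x ∘ σ.symm := rfl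

end Reindex

variable {ι κ α : Type*} [DecidableEq ι] [DecidableEq κ] [LinearOrder α] [OrderBot α]
  [Nontrivial α] [WellFoundedLT α] (e : (ι → α) ≃o (κ → α)) {i : ι} {j : κ}

omit [WellFoundedLT α] in
lemma exists_mapsTo_axis (i : ι) : ∃ j, MapsTo e (axis i) (axis j) := by
  obtain ⟨a₀, ha₀⟩ := exists_ne (⊥ : α)
  have hirr {a : α} (ha : a ≠ ⊥) : SupIrred (e (update ⊥ i a)) :=
    (supIrred_update_bot ha).orderIso_apply e
  obtain ⟨j, hj⟩ := (hirr ha₀).exists_mem_axis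
  refine ⟨j, ?_⟩
  rintro _ ⟨a, rfl⟩
  rcases le_total a a₀ with h | h
  · exact isLowerSet_axis j (e.monotone (update_mono h)) hj
  · obtain ⟨j', hj'⟩ := (hirr (ne_bot_of_le_ne_bot ha₀ h)).exists_mem_axis
    have hj₀' := isLowerSet_axis j' (e.monotone (update_mono h)) hj'
    rwa [eq_of_mem_axis_of_mem_axis hj hj₀' (hirr ha₀).ne_bot]

omit [WellFoundedLT α] in
lemma mapsTo_axis_symm (h : MapsTo e (axis i) (axis j)) : MapsTo e.symm (axis j) (axis i) := by
  obtain ⟨i', hi'⟩ := e.symm.exists_mapsTo_axis j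
  obtain ⟨a₀, ha₀⟩ := exists_ne (⊥ : α)
  have hmem : update ⊥ i a₀ ∈ axis i' := by
    simpa using hi' (h (update_bot_mem_axis i a₀))
  rwa [eq_of_mem_axis_of_mem_axis (update_bot_mem_axis i a₀) hmem
    (mt update_bot_eq_bot_iff.1 ha₀)]

omit [Nontrivial α] in
lemma le_apply_update_bot_apply (h : MapsTo e (axis i) (axis j)) (a : α) :
    a ≤ e (update ⊥ i a) j := by
  have hmono : StrictMono fun a => e (update ⊥ i a) j := by
    intro a b hab
    have hlt := e.strictMono (update_strictMono (f := ⊥) (i := i) hab)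
    rwa [← update_bot_apply_eq_of_mem_axis (h (update_bot_mem_axis i a)),
      ← update_bot_apply_eq_of_mem_axis (h (update_bot_mem_axis i b)), update_lt_update_iff] at hlt
  exact hmono.le_apply

lemma apply_update_bot_of_mapsTo (h : MapsTo e (axis i) (axis j)) (a : α) :
    e (update ⊥ i a) = update ⊥ j a := by
  set b := e (update ⊥ i a) j
  have hb : e (update ⊥ i a) = update ⊥ j b :=
    (update_bot_apply_eq_of_mem_axis (h (update_bot_mem_axis i a))).symm
  have hba : b ≤ a := by
    simpa [← hb] using le_apply_update_bot_apply e.symm (e.mapsTo_axis_symm h) b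
  rw [hb, le_antisymm hba (le_apply_update_bot_apply e h a)]

lemma eq_of_mapsTo_axis {j₁ j₂ : κ} (h₁ : MapsTo e (axis i) (axis j₁))
    (h₂ : MapsTo e (axis i) (axis j₂)) : j₁ = j₂ := by
  obtain ⟨a₀, ha₀⟩ := exists_ne (⊥ : α)
  refine update_bot_left_injective ha₀ ?_
  simp only [← e.apply_update_bot_of_mapsTo h₁, ← e.apply_update_bot_of_mapsTo h₂]

noncomputable def axisEquiv : ι ≃ κ where
  toFun i := (e.exists_mapsTo_axis i).choose
  invFun j := (e.symm.exists_mapsTo_axis j).choose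
  left_inv i := e.symm.eq_of_mapsTo_axis (e.symm.exists_mapsTo_axis _).choose_spec
    (e.mapsTo_axis_symm (e.exists_mapsTo_axis i).choose_spec)
  right_inv j := e.eq_of_mapsTo_axis (e.exists_mapsTo_axis _).choose_spec
    (e.symm.mapsTo_axis_symm (e.symm.exists_mapsTo_axis j).choose_spec)

lemma apply_update_bot (i : ι) (a : α) : e (update ⊥ i a) = update ⊥ (e.axisEquiv i) a :=
  e.apply_update_bot_of_mapsTo (e.exists_mapsTo_axis i).choose_spec a

lemma apply_eq_comp_axisEquiv_symm (x : ι → α) : e x = x ∘ e.axisEquiv.symm := by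
  have hx := e.isLUB_image'.2 (isLUB_range_update_bot x)
  have hrange : (e ∘ fun i => update ⊥ i (x i)) =
      (fun k => update ⊥ k (x (e.axisEquiv.symm k))) ∘ e.axisEquiv :=
    funext fun i => by simp [apply_update_bot]
  rw [← range_comp, hrange, e.axisEquiv.surjective.range_comp] at hx
  exact hx.unique (isLUB_range_update_bot _)

lemma funCongrLeft_axisEquiv : funCongrLeft e.axisEquiv = e :=
  OrderIso.ext (funext fun x => (e.apply_eq_comp_axisEquiv_symm x).symm)

lemma axisEquiv_funCongrLeft (σ : ι ≃ κ) : (funCongrLeft σ : (ι → α) ≃o (κ → α)).axisEquiv = σ := by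
  ext i
  obtain ⟨a₀, ha₀⟩ := exists_ne (⊥ : α)
  refine update_bot_left_injective ha₀ ?_
  simp only [← apply_update_bot, funCongrLeft_apply, update_comp_equiv, Equiv.symm_symm]
  rfl

noncomputable def funCongrLeftMulEquiv : Equiv.Perm ι ≃* ((ι → α) ≃o (ι → α)) where
  toFun := funCongrLeft
  invFun := axisEquiv
  left_inv := axisEquiv_funCongrLeft
  right_inv := funCongrLeft_axisEquiv
  map_mul' _ _ := rfl

end OrderIso

theorem stmt4_general (n : ℕ) :
    (∀ α : (Fin n → ℕ+) ≃o (Fin n → ℕ+), ∃ σ : Equiv.Perm (Fin n),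
      ∀ (x : Fin n → ℕ+) (j : Fin n), α x j = x (σ j)) ∧
    Nonempty (Equiv.Perm (Fin n) ≃* ((Fin n → ℕ+) ≃o (Fin n → ℕ+))) :=
  ⟨fun α => ⟨α.axisEquiv.symm, fun x => congrFun (α.apply_eq_comp_axisEquiv_symm x)⟩,
    ⟨OrderIso.funCongrLeftMulEquiv⟩⟩

/-- Every order isomorphism of (ℕ^n, product order) is induced by a
permutation of coordinates; consequently the group of order automorphisms of ℕ^n
is isomorphic to the symmetric group S_n. -/
theorem stmt4 (n : ℕ) (hn : 0 < n) :
    (∀ α : (Fin n → ℕ+) ≃o (Fin n → ℕ+), ∃ σ : Equiv.Perm (Fin n),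
      ∀ (x : Fin n → ℕ+) (j : Fin n), α x j = x (σ j)) ∧
    Nonempty (Equiv.Perm (Fin n) ≃* ((Fin n → ℕ+) ≃o (Fin n → ℕ+))) :=
  stmt4_general n
end

section
/- Every element α of IPF(ℕ^n) factors uniquely as α = ρ_α σ_α λ_α, where ρ_α is the translation from dom α = ↑x onto ℕ^n given by z ↦ z - x + 1, λ_α is the translation from ℕ^n onto ran α = ↑y given by z ↦ z + y - 1, and σ_α is an order automorphism of ℕ^n (i.e., a coordinate permutation). -/
/-!
An order automorphism `f` of `ℕ^ι` permutes the atoms `eᵢ = Pi.single i 1`, say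
`f eᵢ = e_{σ i}`. Since `z j = 0` iff `eⱼ ≰ z`, the zero pattern of `f z` is that of `z`
permuted by `σ`, so `f` carries the axis `ℕ eᵢ` onto the axis `ℕ e_{σ i}`; two strictly
monotone maps out of the well-order `ℕ` with the same range coincide, so
`f (k eᵢ) = k e_{σ i}`. Comparing `z` with `z i · eᵢ ≤ z` on both sides of `f` then gives
`f z = z ∘ σ⁻¹`, and `σ` is determined by `f`.

For `α ∈ IPF(ℕ^n)` with `dom α = ↑x`, `ran α = ↑y`, the conjugate of `α` by the translations
onto `↑x` and `↑y` is such an automorphism; its permutation is `σ_α`, and `x`, `y` are determined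
by the principal filters they generate.
-/

/-- An element of IPF(ℕ^n): a partial bijection of ℕ^n whose source and target are
principal filters and which is an order isomorphism between them. -/
def IsIPF {n : ℕ} (e : PartialEquiv (Fin n → ℕ+) (Fin n → ℕ+)) : Prop :=
  (∃ x, e.source = Set.Ici x) ∧ (∃ y, e.target = Set.Ici y) ∧
    ∀ a ∈ e.source, ∀ b ∈ e.source, a ≤ b ↔ e a ≤ e b

/-- The composite ρσλ of Lemma 2.14: z ↦ ((z - x + 1) permuted by σ) + y - 1, i.e.
pointwise z_{σ⁻¹(j)} - x_{σ⁻¹(j)} + 1 + y_j - 1 (written so that every PNat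
subtraction is exact). -/
def ipfMap {n : ℕ} (x y : Fin n → ℕ+) (σ : Equiv.Perm (Fin n))
    (z : Fin n → ℕ+) : Fin n → ℕ+ :=
  fun j => z (σ.symm j) + 1 - x (σ.symm j) + y j - 1

open Function Set

lemma Nat.isAtom_iff_eq_one {a : ℕ} : IsAtom a ↔ a = 1 := by
  rw [← bot_covBy_iff, Nat.covBy_iff_add_one_eq, eq_comm]
  rfl

section PiNat

variable {ι : Type*} [DecidableEq ι]

lemma Pi.single_le_iff_le_apply {M : Type*} [AddZeroClass M] [PartialOrder M]
    [CanonicallyOrderedAdd M] {j : ι} {a : M} {z : ι → M} : Pi.single j a ≤ z ↔ a ≤ z j := by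
  simp [Pi.single, update_le_iff]

lemma Pi.mem_range_single_iff {M : Type*} [Zero M] {i : ι} {z : ι → M} :
    z ∈ range (Pi.single i) ↔ ∀ j ≠ i, z j = 0 := by
  refine ⟨?_, fun h => ⟨z i, (eq_update_iff.2 ⟨rfl, h⟩).symm⟩⟩
  rintro ⟨a, rfl⟩ j hj
  simp [hj]

lemma Pi.single_left_injective {M : Type*} [Zero M] {a : M} (ha : a ≠ 0) :
    Injective fun i : ι => Pi.single i a := by
  intro i j h
  by_contra hij
  simpa [Pi.single_eq_of_ne hij, ha] using congrFun h i

lemma Pi.isAtom_iff_exists_eq_single_one {z : ι → ℕ} : IsAtom z ↔ ∃ i, z = Pi.single i 1 := by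
  simp only [Pi.isAtom_iff_eq_single, Nat.isAtom_iff_eq_one, exists_eq_left]
  rfl

noncomputable def Pi.atomEquiv : ι ≃ {z : ι → ℕ // IsAtom z} :=
  Equiv.ofBijective (fun i => ⟨Pi.single i 1, Pi.isAtom_iff_exists_eq_single_one.2 ⟨i, rfl⟩⟩)
    ⟨fun _ _ h => Pi.single_left_injective one_ne_zero (congrArg Subtype.val h),
      fun ⟨_, hz⟩ => (Pi.isAtom_iff_exists_eq_single_one.1 hz).imp fun _ hi => Subtype.ext hi.symm⟩

end PiNat

namespace OrderIso

variable {ι : Type*} [DecidableEq ι] (f : (ι → ℕ) ≃o (ι → ℕ))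

noncomputable def atomPerm : Equiv.Perm ι :=
  Pi.atomEquiv.trans <|
    (f.toEquiv.subtypeEquiv fun z => (f.isAtom_iff z).symm).trans Pi.atomEquiv.symm

lemma map_single_one (i : ι) : f (Pi.single i 1) = Pi.single (f.atomPerm i) 1 :=
  (congrArg Subtype.val (Pi.atomEquiv.apply_symm_apply ⟨f (Pi.single i 1), _⟩)).symm

lemma apply_atomPerm_eq_zero_iff (z : ι → ℕ) (i : ι) : f z (f.atomPerm i) = 0 ↔ z i = 0 := by
  simp only [← Nat.lt_one_iff, ← not_le, ← Pi.single_le_iff_le_apply, ← map_single_one,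
    f.le_iff_le]

lemma image_range_single (i : ι) :
    f '' range (Pi.single i) = range (Pi.single (f.atomPerm i)) := by
  ext w
  rw [image_eq_preimage_symm, mem_preimage, Pi.mem_range_single_iff, Pi.mem_range_single_iff]
  simp only [← f.apply_atomPerm_eq_zero_iff (f.symm w), apply_symm_apply]
  simpa [f.atomPerm.injective.ne_iff] using
    f.atomPerm.forall_congr_right (q := fun j => j ≠ f.atomPerm i → w j = 0)

lemma map_single (i : ι) (k : ℕ) : f (Pi.single i k) = Pi.single (f.atomPerm i) k := by
  have hrange : range (f ∘ Pi.single i) = range (Pi.single (f.atomPerm i)) := by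
    rw [range_comp, image_range_single]
  exact congrFun (((f.strictMono.comp (Pi.single_strictMono i)).range_inj
    (Pi.single_strictMono _)).1 hrange) k

lemma apply_eq_comp_atomPerm_symm (z : ι → ℕ) : f z = z ∘ f.atomPerm.symm := by
  ext j
  obtain ⟨i, rfl⟩ := f.atomPerm.surjective j
  rw [comp_apply, Equiv.symm_apply_apply]
  refine le_antisymm ?_ ?_
  · have : Pi.single (f.atomPerm i) (f z (f.atomPerm i)) ≤ f z :=
      Pi.single_le_iff_le_apply.2 le_rfl
    rwa [← map_single, f.le_iff_le, Pi.single_le_iff_le_apply] at this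
  · have : Pi.single i (z i) ≤ z := Pi.single_le_iff_le_apply.2 le_rfl
    rwa [← f.le_iff_le, map_single, Pi.single_le_iff_le_apply] at this

theorem existsUnique_perm_apply_eq_comp_symm :
    ∃! σ : Equiv.Perm ι, ∀ z, f z = z ∘ σ.symm := by
  refine ⟨f.atomPerm, f.apply_eq_comp_atomPerm_symm, fun σ hσ => Equiv.ext fun i => ?_⟩
  apply Pi.single_left_injective (one_ne_zero (α := ℕ))
  simp only [← map_single_one, hσ, Pi.single_comp_equiv, Equiv.symm_symm]

end OrderIso

def PartialEquiv.toOrderIso {α β : Type*} [Preorder α] [Preorder β] (e : PartialEquiv α β)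
    (he : ∀ a ∈ e.source, ∀ b ∈ e.source, a ≤ b ↔ e a ≤ e b) : e.source ≃o e.target where
  toEquiv := e.toEquiv
  map_rel_iff' {a b} := (he a a.2 b b.2).symm

section Translation

variable {ι : Type*}

/-- `z ↦ x + z`: with coordinates of `ℕ^ι` taken from `0` rather than `1`, this is the paper's
`z ↦ z + x - 1` onto the principal filter `↑x`. -/
def translateIci (x : ι → ℕ+) : (ι → ℕ) ≃o Ici x where
  toFun z := ⟨fun i => ⟨x i + z i, by positivity⟩, fun i => PNat.coe_le_coe _ _ |>.1 le_self_add⟩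
  invFun w i := (w.1 i : ℕ) - x i
  left_inv z := by ext; simp
  right_inv w := Subtype.ext <| funext fun i => PNat.coe_injective <|
    Nat.add_sub_of_le <| (PNat.coe_le_coe _ _).2 (w.2 i)
  map_rel_iff' := forall_congr' fun _ => (PNat.mk_le_mk _ _ _ _).trans (add_le_add_iff_left _)

@[simp]
lemma translateIci_apply_coe (x : ι → ℕ+) (z : ι → ℕ) (i : ι) :
    ((translateIci x z : ι → ℕ+) i : ℕ) = x i + z i :=
  rfl

variable {x y : ι → ℕ+} (e : PartialEquiv (ι → ℕ+) (ι → ℕ+))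
  (hx : e.source = Ici x) (hy : e.target = Ici y)
  (hmono : ∀ a ∈ e.source, ∀ b ∈ e.source, a ≤ b ↔ e a ≤ e b)

/-- The factor `σ_α = λ⁻¹ ∘ α ∘ ρ⁻¹` of the paper. -/
def ipfAut : (ι → ℕ) ≃o (ι → ℕ) :=
  (translateIci x).trans <| (OrderIso.setCongr _ _ hx.symm).trans <|
    (e.toOrderIso hmono).trans <| (OrderIso.setCongr _ _ hy).trans (translateIci y).symm

lemma translateIci_ipfAut (z : ι → ℕ) :
    (translateIci y (ipfAut e hx hy hmono z) : ι → ℕ+) = e (translateIci x z) := by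
  simp only [ipfAut, OrderIso.trans_apply, OrderIso.apply_symm_apply]
  rfl

end Translation

lemma PNat.coe_add_one_sub_add_sub_one {a b : ℕ+} (h : b ≤ a) (c : ℕ+) :
    ((a + 1 - b + c - 1 : ℕ+) : ℕ) = a - b + c := by
  have h' : (b : ℕ) ≤ a := h
  have hc := c.pos
  simp only [PNat.sub_coe, PNat.add_coe, PNat.one_coe, ← PNat.coe_lt_coe]
  split_ifs <;> omega

section IPF

variable {n : ℕ}

lemma ipfMap_translateIci (x y : Fin n → ℕ+) (σ : Equiv.Perm (Fin n)) (z : Fin n → ℕ) :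
    ipfMap x y σ (translateIci x z) = translateIci y (z ∘ σ.symm) :=
  funext fun j => PNat.coe_injective <| by
    rw [ipfMap, PNat.coe_add_one_sub_add_sub_one ((translateIci x z).2 _)]
    simp [add_comm]

lemma eqOn_ipfMap_iff {x y : Fin n → ℕ+} (e : PartialEquiv (Fin n → ℕ+) (Fin n → ℕ+))
    (hx : e.source = Ici x) (hy : e.target = Ici y)
    (hmono : ∀ a ∈ e.source, ∀ b ∈ e.source, a ≤ b ↔ e a ≤ e b) (σ : Equiv.Perm (Fin n)) :
    (∀ w ∈ e.source, e w = ipfMap x y σ w) ↔ ∀ z, ipfAut e hx hy hmono z = z ∘ σ.symm := by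
  rw [hx]
  refine (SetCoe.forall (p := fun w : Ici x => e w = ipfMap x y σ w)).symm.trans <|
    (translateIci x).surjective.forall.trans <| forall_congr' fun z => ?_
  rw [← translateIci_ipfAut, ipfMap_translateIci, Subtype.coe_inj,
    (translateIci y).apply_eq_iff_eq]

end IPF

/-- Every α ∈ IPF(ℕ^n) factors uniquely as α = ρ_α σ_α λ_α, where
ρ_α : ↑x → ℕ^n, z ↦ z - x + 1, λ_α : ℕ^n → ↑y, z ↦ z + y - 1 (x, y the generators of
dom α, ran α) and σ_α a coordinate permutation (order automorphism of ℕ^n);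
equivalently, there is a unique triple (x, y, σ) with dom α = ↑x, ran α = ↑y and
α acting by the composite formula. -/
theorem stmt11 (n : ℕ) (e : PartialEquiv (Fin n → ℕ+) (Fin n → ℕ+)) (he : IsIPF e) :
    ∃! t : (Fin n → ℕ+) × (Fin n → ℕ+) × Equiv.Perm (Fin n),
      e.source = Set.Ici t.1 ∧ e.target = Set.Ici t.2.1 ∧
      ∀ z ∈ e.source, e z = ipfMap t.1 t.2.1 t.2.2 z := by
  obtain ⟨⟨x, hx⟩, ⟨y, hy⟩, hmono⟩ := he
  obtain ⟨σ, hσ, hσ_unique⟩ := (ipfAut e hx hy hmono).existsUnique_perm_apply_eq_comp_symm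
  refine ⟨(x, y, σ), ⟨hx, hy, (eqOn_ipfMap_iff e hx hy hmono σ).2 hσ⟩, ?_⟩
  rintro ⟨x', y', σ'⟩ ⟨hx', hy', hσ'⟩
  obtain rfl : x' = x := Ici_injective (hx'.symm.trans hx)
  obtain rfl : y' = y := Ici_injective (hy'.symm.trans hy)
  rw [hσ_unique σ' ((eqOn_ipfMap_iff e hx hy hmono σ').1 hσ')]
end

section
/- Let α, β ∈ IPF(ℕ^n) with dom α = ↑x, ran α = ↑y, dom β = ↑u, ran β = ↑v, and let σ_α, σ_β be the associated coordinate permutations. Then dom(αβ) = ↑[(max{y,u} − y)σ_α⁻¹ + x], ran(αβ) = ↑[(max{y,u} − u)σ_β + v], and σ_{αβ} = σ_α σ_β, where max is taken componentwise. -/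
/-- The right action of a permutation σ on tuples: (z)σ = (z_{σ⁻¹(1)},...,z_{σ⁻¹(n)}). -/
def permAct {n : ℕ} (σ : Equiv.Perm (Fin n)) (z : Fin n → ℕ+) : Fin n → ℕ+ :=
  fun j => z (σ.symm j)

/-!
On its domain `↑x`, an element with data `(x, y, σ)` acts as `z ↦ (z - x)σ + y`: a coordinate
permutation conjugated by translations. Hence `u ≤ α z` iff `z ≥ (max{y,u} - y)σ⁻¹ + x`, and,
since `β⁻¹` has data `(v, u, σ⁻¹)`, `y ≤ β⁻¹ w` iff `w ≥ (max{y,u} - u)σ + v`; this gives the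
domain and range of `αβ`, and its action on the domain is a coordinatewise computation in `ℕ`.
-/

lemma PNat.coe_sup (a b : ℕ+) : ((a ⊔ b : ℕ+) : ℕ) = max (a : ℕ) b :=
  Monotone.map_max fun a b h => (PNat.coe_le_coe a b).2 h

lemma PNat.coe_sub_of_lt {a b : ℕ+} (h : b < a) : ((a - b : ℕ+) : ℕ) = a - b := by
  rw [PNat.sub_coe, if_pos h]

lemma PNat.coe_add_sub_of_le {a s : ℕ+} (c : ℕ+) (h : a ≤ s) :
    ((s + c - a : ℕ+) : ℕ) = s + c - a := by
  rw [PNat.coe_sub_of_lt (h.trans_lt (PNat.lt_add_right _ _)), PNat.add_coe]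

section

variable {n : ℕ}

lemma coe_ipfMap_apply {x y z : Fin n → ℕ+} {σ : Equiv.Perm (Fin n)} {j : Fin n}
    (h : x (σ.symm j) ≤ z (σ.symm j)) :
    (ipfMap x y σ z j : ℕ) = z (σ.symm j) - x (σ.symm j) + y j := by
  have hlt : x (σ.symm j) < z (σ.symm j) + 1 := PNat.lt_add_one_iff.2 h
  have hpos : 1 < z (σ.symm j) + 1 - x (σ.symm j) + y j := one_le.trans_lt (PNat.lt_add_right _ _)
  rw [← PNat.coe_le_coe] at h
  show ((z (σ.symm j) + 1 - x (σ.symm j) + y j - 1 : ℕ+) : ℕ) = _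
  rw [PNat.coe_sub_of_lt hpos, PNat.add_coe, PNat.coe_sub_of_lt hlt, PNat.add_coe]
  push_cast
  omega

lemma coe_permAct_add_sub_apply (σ : Equiv.Perm (Fin n)) {a s : Fin n → ℕ+} (c : Fin n → ℕ+)
    (h : a ≤ s) (j : Fin n) :
    ((permAct σ s + c - permAct σ a) j : ℕ) = s (σ.symm j) + c j - a (σ.symm j) :=
  PNat.coe_add_sub_of_le _ (h _)

lemma le_ipfMap {x y z : Fin n → ℕ+} (σ : Equiv.Perm (Fin n)) (hxz : x ≤ z) :
    y ≤ ipfMap x y σ z := fun j => by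
  rw [← PNat.coe_le_coe, coe_ipfMap_apply (hxz _)]
  omega

lemma le_permAct_add_sub (σ : Equiv.Perm (Fin n)) {a s : Fin n → ℕ+} (c : Fin n → ℕ+)
    (h : a ≤ s) : c ≤ permAct σ s + c - permAct σ a := fun j => by
  rw [← PNat.coe_le_coe, coe_permAct_add_sub_apply σ c h]
  have := (PNat.coe_le_coe _ _).2 (h (σ.symm j))
  omega

lemma le_ipfMap_iff {x y z : Fin n → ℕ+} (σ : Equiv.Perm (Fin n)) (w : Fin n → ℕ+)
    (hxz : x ≤ z) :
    w ≤ ipfMap x y σ z ↔ permAct σ⁻¹ (y ⊔ w) + x - permAct σ⁻¹ y ≤ z := by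
  have key : ∀ i, w (σ i) ≤ ipfMap x y σ z (σ i) ↔
      (permAct σ⁻¹ (y ⊔ w) + x - permAct σ⁻¹ y) i ≤ z i := fun i => by
    rw [← PNat.coe_le_coe, ← PNat.coe_le_coe, coe_ipfMap_apply (hxz _),
      coe_permAct_add_sub_apply σ⁻¹ x le_sup_left]
    have := (PNat.coe_le_coe _ _).2 (hxz i)
    simp only [Pi.sup_apply, PNat.coe_sup, Equiv.symm_apply_apply, Equiv.Perm.inv_def,
      Equiv.symm_symm]
    omega
  rw [Pi.le_def, Pi.le_def, ← σ.forall_congr_right]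
  exact forall_congr' key

lemma ipfMap_ipfMap_inv {x y z : Fin n → ℕ+} (σ : Equiv.Perm (Fin n)) (hxz : x ≤ z) :
    ipfMap y x σ (ipfMap x y σ⁻¹ z) = z := funext fun j => by
  apply PNat.coe_injective
  have hx := (PNat.coe_le_coe _ _).2 (hxz j)
  rw [coe_ipfMap_apply (le_ipfMap σ⁻¹ hxz _), coe_ipfMap_apply (hxz _)]
  simp only [Equiv.Perm.inv_def, Equiv.symm_symm, Equiv.apply_symm_apply]
  omega

lemma ipfMap_comp {x y u v z : Fin n → ℕ+} (σa σb : Equiv.Perm (Fin n)) (hxz : x ≤ z)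
    (hu : u ≤ ipfMap x y σa z) :
    ipfMap u v σb (ipfMap x y σa z) =
      ipfMap (permAct σa⁻¹ (y ⊔ u) + x - permAct σa⁻¹ y)
        (permAct σb (y ⊔ u) + v - permAct σb u) (σb * σa) z := funext fun j => by
  apply PNat.coe_injective
  have hA := (le_ipfMap_iff σa u hxz).1 hu
  have hk := (PNat.coe_le_coe _ _).2 (hu (σb.symm j))
  have hx := (PNat.coe_le_coe _ _).2 (hxz (σa.symm (σb.symm j)))
  have hyk := (y (σb.symm j)).pos
  rw [coe_ipfMap_apply (hu _), coe_ipfMap_apply (hA _),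
    coe_permAct_add_sub_apply σa⁻¹ x le_sup_left, coe_permAct_add_sub_apply σb v le_sup_right]
  simp only [Pi.sup_apply, PNat.coe_sup]
  rw [coe_ipfMap_apply (hxz _)] at hk ⊢
  simp only [Equiv.Perm.inv_def, Equiv.symm_symm, Equiv.Perm.mul_def, Equiv.symm_trans_apply,
    Equiv.apply_symm_apply]
  omega

end

namespace PartialEquiv

variable {n : ℕ} {e f : PartialEquiv (Fin n → ℕ+) (Fin n → ℕ+)} {x y u v : Fin n → ℕ+}
  {σa σb : Equiv.Perm (Fin n)}

lemma symm_apply_eq_ipfMap {w : Fin n → ℕ+} (hfu : f.source = Set.Ici u)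
    (hff : ∀ z ∈ f.source, f z = ipfMap u v σb z) (hvw : v ≤ w) :
    f.symm w = ipfMap v u σb⁻¹ w := by
  have hmem : ipfMap v u σb⁻¹ w ∈ f.source := hfu ▸ le_ipfMap σb⁻¹ hvw
  rw [← f.left_inv hmem, hff _ hmem, ipfMap_ipfMap_inv σb hvw]

lemma trans_source_eq_Ici (hex : e.source = Set.Ici x) (hfu : f.source = Set.Ici u)
    (hef : ∀ z ∈ e.source, e z = ipfMap x y σa z) :
    (e.trans f).source = Set.Ici (permAct σa⁻¹ (y ⊔ u) + x - permAct σa⁻¹ y) := by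
  rw [hex] at hef
  ext z
  rw [trans_source, hex, hfu, Set.mem_inter_iff, Set.mem_preimage, Set.mem_Ici, Set.mem_Ici,
    Set.mem_Ici]
  constructor
  · rintro ⟨hxz, hu⟩
    rw [hef z hxz] at hu
    exact (le_ipfMap_iff σa u hxz).1 hu
  · intro hz
    have hxz : x ≤ z := (le_permAct_add_sub σa⁻¹ x le_sup_left).trans hz
    rw [hef z hxz]
    exact ⟨hxz, (le_ipfMap_iff σa u hxz).2 hz⟩

lemma trans_target_eq_Ici (hey : e.target = Set.Ici y) (hfu : f.source = Set.Ici u)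
    (hfv : f.target = Set.Ici v) (hff : ∀ z ∈ f.source, f z = ipfMap u v σb z) :
    (e.trans f).target = Set.Ici (permAct σb (y ⊔ u) + v - permAct σb u) := by
  have hsymm (w : Fin n → ℕ+) (hvw : v ≤ w) :
      y ≤ f.symm w ↔ permAct σb (y ⊔ u) + v - permAct σb u ≤ w := by
    rw [symm_apply_eq_ipfMap hfu hff hvw, le_ipfMap_iff σb⁻¹ y hvw, inv_inv, sup_comm]
  ext w
  rw [trans_target, hfv, hey, Set.mem_inter_iff, Set.mem_preimage, Set.mem_Ici, Set.mem_Ici,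
    Set.mem_Ici]
  constructor
  · rintro ⟨hvw, hy⟩
    exact (hsymm w hvw).1 hy
  · intro hw
    have hvw : v ≤ w := (le_permAct_add_sub σb v le_sup_right).trans hw
    exact ⟨hvw, (hsymm w hvw).2 hw⟩

lemma trans_apply_eq_ipfMap (hex : e.source = Set.Ici x) (hfu : f.source = Set.Ici u)
    (hef : ∀ z ∈ e.source, e z = ipfMap x y σa z) (hff : ∀ z ∈ f.source, f z = ipfMap u v σb z)
    {z : Fin n → ℕ+} (hz : z ∈ (e.trans f).source) :
    e.trans f z = ipfMap (permAct σa⁻¹ (y ⊔ u) + x - permAct σa⁻¹ y)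
      (permAct σb (y ⊔ u) + v - permAct σb u) (σb * σa) z := by
  rw [trans_source, Set.mem_inter_iff, Set.mem_preimage] at hz
  obtain ⟨hxz, hu⟩ := hz
  rw [coe_trans, Function.comp_apply, hff _ hu, hef z hxz]
  rw [hfu, Set.mem_Ici, hef z hxz] at hu
  rw [hex] at hxz
  exact ipfMap_comp σa σb hxz hu

end PartialEquiv

/-- `e.trans f` is `αβ` ("`α` then `β`"), so the paper's `σ_α σ_β` is `σb * σa`; the corners are
written as `permAct σ (y ⊔ u) + w - permAct σ y` so that the subtraction in `ℕ+` is exact. -/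
theorem stmt12_general (n : ℕ) (e f : PartialEquiv (Fin n → ℕ+) (Fin n → ℕ+))
    (x y u v : Fin n → ℕ+) (σa σb : Equiv.Perm (Fin n))
    (hex : e.source = Set.Ici x) (hey : e.target = Set.Ici y)
    (hfu : f.source = Set.Ici u) (hfv : f.target = Set.Ici v)
    (hef : ∀ z ∈ e.source, e z = ipfMap x y σa z)
    (hff : ∀ z ∈ f.source, f z = ipfMap u v σb z) :
    (e.trans f).source = Set.Ici (permAct σa⁻¹ (y ⊔ u) + x - permAct σa⁻¹ y) ∧
    (e.trans f).target = Set.Ici (permAct σb (y ⊔ u) + v - permAct σb u) ∧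
    ∀ z ∈ (e.trans f).source, (e.trans f) z =
      ipfMap (permAct σa⁻¹ (y ⊔ u) + x - permAct σa⁻¹ y)
        (permAct σb (y ⊔ u) + v - permAct σb u) (σb * σa) z :=
  ⟨e.trans_source_eq_Ici hex hfu hef, e.trans_target_eq_Ici hey hfu hfv hff,
    fun _ hz => e.trans_apply_eq_ipfMap hex hfu hef hff hz⟩

/-- For α, β ∈ IPF(ℕ^n) with dom α = ↑x, ran α = ↑y, dom β = ↑u,
ran β = ↑v and coordinate permutations σ_α, σ_β:
dom(αβ) = ↑[(max{y,u} − y)σ_α⁻¹ + x], ran(αβ) = ↑[(max{y,u} − u)σ_β + v] and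
σ_{αβ} = σ_α σ_β.  (The generators are written as `permAct σ (y ⊔ u) + w - permAct σ y`
etc. so that the PNat subtraction is exact; `αβ = e.trans f` is "α then β", and the
paper's composite permutation "σ_α then σ_β" is `σb * σa` in Mathlib's convention.) -/
theorem stmt12 (n : ℕ) (e f : PartialEquiv (Fin n → ℕ+) (Fin n → ℕ+))
    (he : IsIPF e) (hf : IsIPF f)
    (x y u v : Fin n → ℕ+) (σa σb : Equiv.Perm (Fin n))
    (hex : e.source = Set.Ici x) (hey : e.target = Set.Ici y)
    (hfu : f.source = Set.Ici u) (hfv : f.target = Set.Ici v)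
    (hef : ∀ z ∈ e.source, e z = ipfMap x y σa z)
    (hff : ∀ z ∈ f.source, f z = ipfMap u v σb z) :
    (e.trans f).source = Set.Ici (permAct σa⁻¹ (y ⊔ u) + x - permAct σa⁻¹ y) ∧
    (e.trans f).target = Set.Ici (permAct σb (y ⊔ u) + v - permAct σb u) ∧
    ∀ z ∈ (e.trans f).source, (e.trans f) z =
      ipfMap (permAct σa⁻¹ (y ⊔ u) + x - permAct σa⁻¹ y)
        (permAct σb (y ⊔ u) + v - permAct σb u) (σb * σa) z :=
  stmt12_general n e f x y u v σa σb hex hey hfu hfv hef hff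
end
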